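/- arXiv:2410.17431 — 2 statements merged into one kernel-verified Lean document; each statement's English description precedes it below -/
import Mathlib

section
/- Let f : ℝⁿ → ℝ be differentiable and satisfy the Polyak–Łojasiewicz condition with constant μ > 0, i.e., for all x, (1/(2μ))‖∇f(x)‖² ≥ sup f − f(x). Then f satisfies quadratic growth: for any maximizer x* of f and any x, f(x*) − f(x) ≥ (μ/2)·d(x, argmax f)², where d(x, argmax f) is the distance from x to the set of maximizers. -/
/-!
The square root `φ = √(sup f - f)` of the suboptimality gap turns the PL inequality into a lower
bound `√(μ/2)` on the slope of `φ` off the set of maximizers. Minimizing `φ + ε · dist(·, x)` for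
`ε < √(μ/2)` then produces a maximizer within distance `φ x / ε` of `x`: at a minimizer `φ` must
vanish, since otherwise `φ` could be decreased faster than the penalty grows.
-/

open Metric Filter Topology

/-- A nonlocal form of the lower bound `c` on the strong slope of `φ` off its zero set. -/
def DescendsAtRate {X : Type*} [MetricSpace X] (φ : X → ℝ) (c : ℝ) : Prop :=
  ∀ y, 0 < φ y → ∃ z ≠ y, φ z + c * dist z y ≤ φ y

section MetricSpace

variable {X : Type*} [MetricSpace X] [ProperSpace X] {φ : X → ℝ}

theorem DescendsAtRate.exists_eq_zero_mul_dist_le {c ε : ℝ} (h : DescendsAtRate φ c)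
    (hφ : Continuous φ) (hφ_nonneg : ∀ y, 0 ≤ φ y) (hε : 0 < ε) (hεc : ε < c) (x : X) :
    ∃ p, φ p = 0 ∧ ε * dist p x ≤ φ x := by
  obtain ⟨p, hp⟩ : ∃ p, ∀ y, φ p + ε * dist p x ≤ φ y + ε * dist y x := by
    have hψ : Continuous fun y => φ y + ε * dist y x := by fun_prop
    refine hψ.exists_forall_le' x ?_
    filter_upwards [((tendsto_dist_right_cocompact_atTop x).const_mul_atTop hε).eventually_ge_atTop
      (φ x + ε * dist x x)] with y hy
    linarith [hφ_nonneg y]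
  have hp0 : φ p = 0 := by
    refine le_antisymm (not_lt.1 fun hpos => ?_) (hφ_nonneg p)
    obtain ⟨z, hzp, hz⟩ := h p hpos
    have htri := mul_le_mul_of_nonneg_left (dist_triangle z p x) hε.le
    have hgain := mul_lt_mul_of_pos_right hεc (dist_pos.2 hzp)
    linarith [hp z]
  refine ⟨p, hp0, ?_⟩
  simpa [hp0] using hp x

theorem mul_infDist_le_of_descendsAtRate {s : ℝ} (hφ : Continuous φ)
    (hφ_nonneg : ∀ y, 0 ≤ φ y) (h : ∀ c ∈ Set.Ioo 0 s, DescendsAtRate φ c) (x : X) :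
    s * infDist x {y | φ y = 0} ≤ φ x := by
  have hε : ∀ ε < s, ε * infDist x {y | φ y = 0} ≤ φ x := by
    intro ε hεs
    rcases le_or_gt ε 0 with hε0 | hε0
    · exact (mul_nonpos_of_nonpos_of_nonneg hε0 infDist_nonneg).trans (hφ_nonneg x)
    obtain ⟨c, hεc, hcs⟩ := exists_between hεs
    obtain ⟨p, hp0, hp⟩ :=
      (h c ⟨hε0.trans hεc, hcs⟩).exists_eq_zero_mul_dist_le hφ hφ_nonneg hε0 hεc x
    calc ε * infDist x {y | φ y = 0} ≤ ε * dist p x := by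
          rw [dist_comm]; exact mul_le_mul_of_nonneg_left (infDist_le_dist_of_mem hp0) hε0.le
      _ ≤ φ x := hp
  have hlim : Tendsto (fun ε => ε * infDist x {y | φ y = 0}) (𝓝[<] s)
      (𝓝 (s * infDist x {y | φ y = 0})) :=
    tendsto_nhdsWithin_of_tendsto_nhds (continuous_mul_const _).continuousAt
  exact le_of_tendsto hlim (eventually_nhdsWithin_of_forall hε)

end MetricSpace

theorem HasFDerivAt.exists_add_mul_dist_le {E : Type*} [NormedAddCommGroup E] [NormedSpace ℝ E]
    {g : E → ℝ} {L : E →L[ℝ] ℝ} {y : E} (hg : HasFDerivAt g L y) {c : ℝ} (hc : 0 ≤ c)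
    (hcL : c < ‖L‖) : ∃ z ≠ y, g z + c * dist z y ≤ g y := by
  obtain ⟨u, hu, hLu⟩ : ∃ u : E, ‖u‖ < 1 ∧ L u < -c := by
    obtain ⟨w, hw, hcw⟩ := L.exists_lt_apply_of_lt_opNorm hcL
    rcases le_or_gt 0 (L w) with hLw | hLw
    · refine ⟨-w, by rwa [norm_neg], ?_⟩
      rw [Real.norm_of_nonneg hLw] at hcw
      rw [map_neg]; linarith
    · rw [Real.norm_of_nonpos hLw.le] at hcw
      exact ⟨w, hw, by linarith⟩
  have hu0 : u ≠ 0 := by rintro rfl; rw [map_zero] at hLu; linarith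
  have hLu' : L u < -c * ‖u‖ := by nlinarith [norm_nonneg u]
  have hline : HasDerivAt (fun t : ℝ => g (y + t • u)) (L u) 0 := by
    have hcurve : HasDerivAt (fun t : ℝ => y + t • u) u 0 := by
      simpa using ((hasDerivAt_id (0 : ℝ)).smul_const u).const_add y
    exact (by simpa using hg : HasFDerivAt g L (y + (0 : ℝ) • u)).comp_hasDerivAt 0 hcurve
  have hslope : ∀ᶠ t in 𝓝[>] 0, slope (fun t : ℝ => g (y + t • u)) 0 t < -c * ‖u‖ :=
    hline.hasDerivWithinAt.limsup_slope_le' Set.self_notMem_Ioi hLu'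
  obtain ⟨t, hslope, ht : 0 < t⟩ := (hslope.and self_mem_nhdsWithin).exists
  refine ⟨y + t • u, by simpa [ht.ne'] using hu0, ?_⟩
  rw [slope_def_field, div_lt_iff₀ (by simpa using ht)] at hslope
  rw [dist_eq_norm, add_sub_cancel_left, norm_smul, Real.norm_of_nonneg ht.le]
  simp only [zero_smul, add_zero, sub_zero] at hslope
  linarith

theorem descendsAtRate_sqrt_sub {E : Type*} [NormedAddCommGroup E] [InnerProductSpace ℝ E]
    [CompleteSpace E] {f : E → ℝ} {S μ c : ℝ} (hf : Differentiable ℝ f)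
    (hPL : ∀ x, 2 * μ * (S - f x) ≤ ‖gradient f x‖ ^ 2) (hc0 : 0 ≤ c) (hc : c < √(μ / 2)) :
    DescendsAtRate (fun x => √(S - f x)) c := by
  intro y hy
  have hgap : 0 < S - f y := Real.sqrt_pos.1 hy
  have hμ : 0 < μ := by linarith [Real.sqrt_pos.1 (hc0.trans_lt hc)]
  have hfy : HasFDerivAt f (InnerProductSpace.toDual ℝ E (gradient f y)) y :=
    hasGradientAt_iff_hasFDerivAt.1 (hf y).hasGradientAt
  refine ((hfy.const_sub S).sqrt hgap.ne').exists_add_mul_dist_le hc0 (hc.trans_le ?_)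
  rw [norm_smul, norm_neg, LinearIsometryEquiv.norm_map, Real.norm_of_nonneg (by positivity),
    one_div_mul_eq_div, le_div_iff₀ (by positivity),
    ← pow_le_pow_iff_left₀ (by positivity) (norm_nonneg _) two_ne_zero]
  calc (√(μ / 2) * (2 * √(S - f y))) ^ 2 = 2 * μ * (S - f y) := by
        rw [mul_pow, mul_pow, Real.sq_sqrt (by positivity), Real.sq_sqrt hgap.le]; ring
    _ ≤ ‖gradient f y‖ ^ 2 := hPL y

theorem pl_implies_quadratic_growth_general {n : ℕ}
    (f : EuclideanSpace ℝ (Fin n) → ℝ) (μ : ℝ) (hμ : 0 < μ)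
    (hdiff : Differentiable ℝ f)
    (hbdd : BddAbove (Set.range f))
    (M : Set (EuclideanSpace ℝ (Fin n)))
    (hM : M = {x | ∀ y, f y ≤ f x})
    (hPL : ∀ x, ‖gradient f x‖ ^ 2 ≥ 2 * μ * ((⨆ y, f y) - f x)) :
    ∀ xstar ∈ M, ∀ x, f xstar - f x ≥ μ / 2 * (infDist x M) ^ 2 := by
  intro xstar hxstar x
  set S := ⨆ y, f y with hS
  have hM' : M = {y | √(S - f y) = 0} := by
    ext y
    rw [hM, Set.mem_ofPred_eq, Set.mem_ofPred_eq, Real.sqrt_eq_zero', sub_nonpos, hS,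
      ciSup_le_iff hbdd]
  have hxstar : f xstar = S :=
    le_antisymm (le_ciSup hbdd xstar) (ciSup_le (by rwa [hM] at hxstar))
  have hgrowth : √(μ / 2) * infDist x M ≤ √(S - f x) := by
    rw [hM']
    exact mul_infDist_le_of_descendsAtRate (continuous_const.sub hdiff.continuous).sqrt
      (fun _ => Real.sqrt_nonneg _) (fun c hc => descendsAtRate_sqrt_sub hdiff hPL hc.1.le hc.2) x
  have hsq := pow_le_pow_left₀ (mul_nonneg (Real.sqrt_nonneg _) infDist_nonneg) hgrowth 2
  rw [mul_pow, Real.sq_sqrt (by positivity), Real.sq_sqrt (sub_nonneg.2 (le_ciSup hbdd x))] at hsq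
  linarith

/-- PL condition implies quadratic growth. -/
theorem pl_implies_quadratic_growth {n : ℕ}
    (f : EuclideanSpace ℝ (Fin n) → ℝ) (μ : ℝ) (hμ : 0 < μ)
    (hdiff : Differentiable ℝ f)
    (hbdd : BddAbove (Set.range f))
    (M : Set (EuclideanSpace ℝ (Fin n)))
    (hM : M = {x | ∀ y, f y ≤ f x})
    (hMne : M.Nonempty)
    (hPL : ∀ x, ‖gradient f x‖ ^ 2 ≥ 2 * μ * ((⨆ y, f y) - f x)) :
    ∀ xstar ∈ M, ∀ x, f xstar - f x ≥ μ / 2 * (infDist x M) ^ 2 :=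
  pl_implies_quadratic_growth_general f μ hμ hdiff hbdd M hM hPL
end

section
/- Suppose g : ℝᵐ × ℝⁿ → ℝ is such that for each θ, φ ↦ g(θ, φ) satisfies the PL condition with constant μ > 0, and ∇_φ g is L-Lipschitz in θ uniformly in φ (i.e., ‖∇_φ g(θ₁, φ) − ∇_φ g(θ₂, φ)‖ ≤ L‖θ₁ − θ₂‖). Then for any θ₁, θ₂ and any maximizer φ₁ of g(θ₁, ·), there exists a maximizer φ₂ of g(θ₂, ·) with ‖φ₁ − φ₂‖ ≤ (L/μ)‖θ₁ − θ₂‖. -/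
/-!
A PL function has quadratic growth around its set of maximizers. Wherever `f < M`, the PL
inequality gives `√(M - f)` a slope of at least `√(μ/2)`, so minimizing `√(M - f) + c‖· - x‖`
over a large ball, for `c < √(μ/2)`, lands on a maximizer `y` with `c‖x - y‖ ≤ √(M - f x)`.
Combined with PL at `x` this yields a maximizer `y` with `μ‖x - y‖ ≤ ‖∇f x‖`. At a maximizer
`φ₁` of `g θ₁` the gradient vanishes, so the Lipschitz hypothesis bounds `‖∇(g θ₂) φ₁‖` by
`L‖θ₁ - θ₂‖`.
-/

open Metric Set Filter Topology

theorem HasFDerivAt.exists_add_mul_norm_sub_lt {E : Type*} [NormedAddCommGroup E]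
    [NormedSpace ℝ E] {h : E → ℝ} {h' : E →L[ℝ] ℝ} {y : E} {c : ℝ}
    (hh : HasFDerivAt h h' y) (hc : 0 ≤ c) (hch : c < ‖h'‖) :
    ∃ z, h z + c * ‖z - y‖ < h y := by
  obtain ⟨v, hv, hcv⟩ : ∃ v : E, ‖v‖ < 1 ∧ h' v < -c := by
    obtain ⟨v, hv, hcv⟩ := h'.exists_lt_apply_of_lt_opNorm hch
    rcases lt_abs.1 hcv with hcv | hcv
    · exact ⟨-v, by rwa [norm_neg], by rw [map_neg]; linarith⟩
    · exact ⟨v, hv, by linarith⟩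
  have hline : HasDerivAt (fun t : ℝ => h (y + t • v)) (h' v) 0 := by
    have hγ : HasDerivAt (fun t : ℝ => y + t • v) v 0 := by
      simpa using ((hasDerivAt_id (0 : ℝ)).smul_const v).const_add y
    exact (by simpa using hh : HasFDerivAt h h' (y + (0 : ℝ) • v)).comp_hasDerivAt 0 hγ
  have hslope : ∀ᶠ t in 𝓝[>] (0 : ℝ), slope (fun t : ℝ => h (y + t • v)) 0 t < -c * ‖v‖ :=
    hline.hasDerivWithinAt.limsup_slope_le' self_notMem_Ioi (by nlinarith [norm_nonneg v])
  obtain ⟨t, ht, ht0⟩ := (hslope.and self_mem_nhdsWithin).exists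
  refine ⟨y + t • v, ?_⟩
  rw [slope_def_field, zero_smul, add_zero, sub_zero, div_lt_iff₀ ht0] at ht
  rw [add_sub_cancel_left, norm_smul, Real.norm_of_nonneg ht0.le]
  linarith

theorem exists_eq_zero_and_mul_dist_le_of_forall_exists_lt {X : Type*} [MetricSpace X]
    [ProperSpace X] {h : X → ℝ} {c : ℝ} (hcont : Continuous h) (hnonneg : ∀ x, 0 ≤ h x)
    (hc : 0 < c) (hdesc : ∀ y, 0 < h y → ∃ z, h z + c * dist z y < h y) (x : X) :
    ∃ y, h y = 0 ∧ c * dist x y ≤ h x := by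
  set F : X → ℝ := fun z => h z + c * dist z x
  have hF : Continuous F := hcont.add (continuous_const.mul (continuous_id.dist continuous_const))
  have hx : x ∈ closedBall x (h x / c) := mem_closedBall_self (by positivity [hnonneg x])
  obtain ⟨y, hyK, hymin⟩ := (isCompact_closedBall x (h x / c)).exists_isMinOn ⟨x, hx⟩
    hF.continuousOn
  have hFy : F y ≤ h x := hymin hx |>.trans_eq (by simp [F])
  refine ⟨y, (hnonneg y).eq_or_lt.elim Eq.symm fun hpos => ?_, by
    rw [dist_comm]; linarith [hnonneg y]⟩
  obtain ⟨z, hz⟩ := hdesc y hpos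
  have htri : c * dist z x ≤ c * dist z y + c * dist y x := by
    rw [← mul_add]; exact mul_le_mul_of_nonneg_left (dist_triangle z y x) hc.le
  have hzK : z ∈ closedBall x (h x / c) := by
    rw [mem_closedBall, le_div_iff₀' hc]; linarith [hnonneg z]
  have hFz : F y ≤ F z := hymin hzK
  simp only [F] at hFz
  linarith

section PolyakLojasiewicz

variable {E : Type*} [NormedAddCommGroup E] [NormedSpace ℝ E] {f : E → ℝ} {μ M : ℝ}

theorem exists_sqrt_sub_add_mul_norm_sub_lt {c : ℝ} {y : E} (hf : DifferentiableAt ℝ f y)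
    (hy : f y < M)
    (hPL : 2 * μ * (M - f y) ≤ ‖fderiv ℝ f y‖ ^ 2) (hc : 0 ≤ c) (hcμ : c < √(μ / 2)) :
    ∃ z, √(M - f z) + c * ‖z - y‖ < √(M - f y) := by
  have hgap : 0 < M - f y := sub_pos.2 hy
  have hs : 0 < √(M - f y) := Real.sqrt_pos.2 hgap
  have hc2 : c ^ 2 < μ / 2 := (Real.lt_sqrt hc).1 hcμ
  refine ((hf.hasFDerivAt.const_sub M).sqrt hgap.ne').exists_add_mul_norm_sub_lt hc ?_
  rw [norm_smul, norm_neg, Real.norm_of_nonneg (by positivity), one_div, inv_mul_eq_div,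
    lt_div_iff₀ (by positivity)]
  refine (pow_lt_pow_iff_left₀ (by positivity) (norm_nonneg _) two_ne_zero).1 ?_
  rw [mul_pow, mul_pow, Real.sq_sqrt hgap.le]
  nlinarith

/-- `M` stands for `⨆ x, f x`. -/
def IsPolyakLojasiewicz (f : E → ℝ) (μ M : ℝ) : Prop :=
  ∀ x, 2 * μ * (M - f x) ≤ ‖fderiv ℝ f x‖ ^ 2

theorem IsPolyakLojasiewicz.exists_eq_and_mul_sq_norm_sub_le [ProperSpace E]
    (hPL : IsPolyakLojasiewicz f μ M) (hμ : 0 < μ) (hf : Differentiable ℝ f)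
    (hM : ∀ x, f x ≤ M) (x : E) :
    ∃ y, f y = M ∧ μ / 2 * ‖x - y‖ ^ 2 ≤ M - f x := by
  have hgap : ∀ z, 0 ≤ M - f z := fun z => sub_nonneg.2 (hM z)
  have hnear : ∀ c, 0 < c → c < √(μ / 2) → ∃ y, f y = M ∧ c * dist x y ≤ √(M - f x) := by
    intro c hc hcμ
    obtain ⟨y, hy, hyx⟩ := exists_eq_zero_and_mul_dist_le_of_forall_exists_lt
      (h := fun z => √(M - f z)) (continuous_const.sub hf.continuous).sqrt
      (fun z => Real.sqrt_nonneg _) hc (fun y hy => by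
        simpa only [dist_eq_norm] using exists_sqrt_sub_add_mul_norm_sub_lt (hf y)
          (sub_pos.1 (Real.sqrt_pos.1 hy)) (hPL y) hc.le hcμ) x
    exact ⟨y, by linarith [Real.sqrt_eq_zero'.1 hy, hM y], hyx⟩
  have hμ2 : 0 < √(μ / 2) := Real.sqrt_pos.2 (by positivity)
  have hS : {y | f y = M}.Nonempty := by
    obtain ⟨y, hy, -⟩ := hnear _ (half_pos hμ2) (half_lt_self hμ2)
    exact ⟨y, hy⟩
  obtain ⟨y, hyS, hyx⟩ :=
    (isClosed_eq hf.continuous continuous_const).exists_infDist_eq_dist hS x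
  refine ⟨y, hyS, ?_⟩
  -- The descent step needs `c < √(μ/2)` strictly, so the bound at `√(μ/2)` is a limit.
  have hdist : √(μ / 2) * ‖x - y‖ ≤ √(M - f x) := by
    rw [← dist_eq_norm]
    refine mul_le_of_forall_lt_of_nonneg hμ2.le (Real.sqrt_nonneg _)
      fun c hc hcμ d hd hdy => ?_
    rcases hc.eq_or_lt with rfl | hc
    · simp
    obtain ⟨y', hy'S, hy'x⟩ := hnear c hc hcμ
    calc c * d ≤ c * dist x y' := by
          gcongr
          exact hdy.le.trans (hyx ▸ infDist_le_dist_of_mem hy'S)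
      _ ≤ √(M - f x) := hy'x
  calc μ / 2 * ‖x - y‖ ^ 2 = (√(μ / 2) * ‖x - y‖) ^ 2 := by
        rw [mul_pow, Real.sq_sqrt (by positivity)]
    _ ≤ √(M - f x) ^ 2 := by gcongr
    _ = M - f x := Real.sq_sqrt (hgap x)

theorem IsPolyakLojasiewicz.exists_eq_and_mul_norm_sub_le_norm_fderiv [ProperSpace E]
    (hPL : IsPolyakLojasiewicz f μ M) (hμ : 0 < μ) (hf : Differentiable ℝ f)
    (hM : ∀ x, f x ≤ M) (x : E) :
    ∃ y, f y = M ∧ μ * ‖x - y‖ ≤ ‖fderiv ℝ f x‖ := by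
  obtain ⟨y, hy, hgrowth⟩ := hPL.exists_eq_and_mul_sq_norm_sub_le hμ hf hM x
  refine ⟨y, hy, (pow_le_pow_iff_left₀ (by positivity) (norm_nonneg _) two_ne_zero).1 ?_⟩
  nlinarith [hPL x]

end PolyakLojasiewicz

theorem norm_gradient {E : Type*} [NormedAddCommGroup E] [InnerProductSpace ℝ E] [CompleteSpace E]
    (f : E → ℝ) (x : E) : ‖gradient f x‖ = ‖fderiv ℝ f x‖ :=
  (InnerProductSpace.toDual ℝ E).symm.norm_map _

theorem maximizer_lipschitz_stability_general {m n : ℕ}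
    (g : EuclideanSpace ℝ (Fin m) → EuclideanSpace ℝ (Fin n) → ℝ)
    (μ L : ℝ) (hμ : 0 < μ)
    (hdiff : ∀ θ, Differentiable ℝ (g θ))
    (hattain : ∀ θ, ∃ φ, ∀ ψ, g θ ψ ≤ g θ φ)
    (hPL : ∀ θ φ, ‖gradient (g θ) φ‖ ^ 2 ≥ 2 * μ * ((⨆ ψ, g θ ψ) - g θ φ))
    (hLip : ∀ θ₁ θ₂ φ, ‖gradient (g θ₁) φ - gradient (g θ₂) φ‖ ≤ L * ‖θ₁ - θ₂‖) :
    ∀ θ₁ θ₂ φ₁, (∀ ψ, g θ₁ ψ ≤ g θ₁ φ₁) →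
      ∃ φ₂, (∀ ψ, g θ₂ ψ ≤ g θ₂ φ₂) ∧ ‖φ₁ - φ₂‖ ≤ (L / μ) * ‖θ₁ - θ₂‖ := by
  intro θ₁ θ₂ φ₁ hmax₁
  obtain ⟨φ, hφ⟩ := hattain θ₂
  have hsup : (⨆ ψ, g θ₂ ψ) = g θ₂ φ :=
    le_antisymm (ciSup_le hφ) (le_ciSup ⟨_, forall_mem_range.2 hφ⟩ φ)
  have hPL₂ : IsPolyakLojasiewicz (g θ₂) μ (g θ₂ φ) := fun ψ => by
    simpa only [hsup, norm_gradient] using hPL θ₂ ψ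
  obtain ⟨φ₂, hφ₂, hdist⟩ :=
    hPL₂.exists_eq_and_mul_norm_sub_le_norm_fderiv hμ (hdiff θ₂) hφ φ₁
  have hgrad₁ : gradient (g θ₁) φ₁ = 0 := by
    rw [gradient, IsLocalMax.fderiv_eq_zero (.of_forall hmax₁), map_zero]
  refine ⟨φ₂, fun ψ => hφ₂ ▸ hφ ψ, ?_⟩
  rw [div_mul_eq_mul_div, le_div_iff₀' hμ]
  calc μ * ‖φ₁ - φ₂‖ ≤ ‖fderiv ℝ (g θ₂) φ₁‖ := hdist
    _ = ‖gradient (g θ₁) φ₁ - gradient (g θ₂) φ₁‖ := by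
      rw [hgrad₁, zero_sub, norm_neg, norm_gradient]
    _ ≤ L * ‖θ₁ - θ₂‖ := hLip θ₁ θ₂ φ₁

/-- Lipschitz stability of maximizers under the PL condition. -/
theorem maximizer_lipschitz_stability {m n : ℕ}
    (g : EuclideanSpace ℝ (Fin m) → EuclideanSpace ℝ (Fin n) → ℝ)
    (μ L : ℝ) (hμ : 0 < μ) (hL : 0 ≤ L)
    (hdiff : ∀ θ, Differentiable ℝ (g θ))
    (hattain : ∀ θ, ∃ φ, ∀ ψ, g θ ψ ≤ g θ φ)
    (hPL : ∀ θ φ, ‖gradient (g θ) φ‖ ^ 2 ≥ 2 * μ * ((⨆ ψ, g θ ψ) - g θ φ))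
    (hLip : ∀ θ₁ θ₂ φ, ‖gradient (g θ₁) φ - gradient (g θ₂) φ‖ ≤ L * ‖θ₁ - θ₂‖) :
    ∀ θ₁ θ₂ φ₁, (∀ ψ, g θ₁ ψ ≤ g θ₁ φ₁) →
      ∃ φ₂, (∀ ψ, g θ₂ ψ ≤ g θ₂ φ₂) ∧ ‖φ₁ - φ₂‖ ≤ (L / μ) * ‖θ₁ - θ₂‖ :=
  maximizer_lipschitz_stability_general g μ L hμ hdiff hattain hPL hLip
end
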